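/- In flat spacetime (vanishing Riemann tensor), the scalar superenergy tensor S_{αβλμ} of a solution of the wave equation ∇_μ∇^μ φ = 0 is divergence-free: ∇^α S_{αβλμ} = 0. -/

import Mathlib

/-! Expanding `∇^α S_{αβλμ}` by the Leibniz rule and contracting `g^{αα'} g_{α'β} = δ^α_β` gives
`∇^α P_{αβλμ} − ∇_β (H_λ^ρ H_{μρ}) − g_{λμ} ∇^α (H_α^ρ H_{βρ}) + ½ g_{λμ} ∇_β (H_{σρ} H^{σρ})`,
where `P_{αβλμ} = H_{αλ} H_{μβ} + H_{αμ} H_{βλ}`. In flat space `∇∇∇φ` is totally symmetric, so each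
trace `g^{ab} ∇_a∇_b∇_c φ` equals `∇_c □φ = 0`. This leaves `∇^α P_{αβλμ} = ∇_β (H_λ^ρ H_{μρ})` and
`∇^α (H_α^ρ H_{βρ}) = H^{σρ} ∇_β H_{σρ} = ½ ∇_β (H_{σρ} H^{σρ})`, and the four terms cancel. -/

/-- The basic superenergy tensor of a (massless) scalar field,
`S_{αβλμ} = ∇_α∇_λφ ∇_μ∇_βφ + ∇_α∇_μφ ∇_β∇_λφ − g_{αβ} ∇_λ∇^ρφ ∇_μ∇_ρφ
  − g_{λμ} ∇_α∇^ρφ ∇_β∇_ρφ + (1/2) g_{αβ} g_{λμ} ∇_σ∇_ρφ ∇^σ∇^ρφ`,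
written in terms of the Hessian `H a b = ∇_a∇_b φ`, the metric `g` and its
inverse `ginv`. -/
noncomputable def Ssc {ι : Type*} [Fintype ι] (g ginv : ι → ι → ℝ)
    (H : ι → ι → ℝ) (α β l μ : ι) : ℝ :=
  H α l * H μ β + H α μ * H β l
  - g α β * (∑ ρ, ∑ ρ', ginv ρ ρ' * H l ρ * H μ ρ')
  - g l μ * (∑ ρ, ∑ ρ', ginv ρ ρ' * H α ρ * H β ρ')
  + (1/2) * g α β * g l μ *
      (∑ σ, ∑ ρ, ∑ σ', ∑ ρ', ginv σ σ' * ginv ρ ρ' * H σ ρ * H σ' ρ')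

/-- The covariant derivative `∇_n S_{αβλμ}` of the scalar superenergy tensor,
obtained by the Leibniz rule from its defining formula (`∇g = 0`);
`DH n a b = ∇_n ∇_a ∇_b φ` is the derivative of the Hessian `H`. -/
noncomputable def DSsc {ι : Type*} [Fintype ι] (g ginv : ι → ι → ℝ)
    (H : ι → ι → ℝ) (DH : ι → ι → ι → ℝ) (n α β l μ : ι) : ℝ :=
  DH n α l * H μ β + H α l * DH n μ β + DH n α μ * H β l + H α μ * DH n β l
  - g α β * (∑ ρ, ∑ ρ', ginv ρ ρ' * (DH n l ρ * H μ ρ' + H l ρ * DH n μ ρ'))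
  - g l μ * (∑ ρ, ∑ ρ', ginv ρ ρ' * (DH n α ρ * H β ρ' + H α ρ * DH n β ρ'))
  + (1/2) * g α β * g l μ * (∑ σ, ∑ ρ, ∑ σ', ∑ ρ',
      ginv σ σ' * ginv ρ ρ' * (DH n σ ρ * H σ' ρ' + H σ ρ * DH n σ' ρ'))

section ContractionLemmas

variable {ι R : Type*} [Fintype ι] [Semiring R]

theorem sum_sum_mul_swap_of_symm {q : ι → ι → R} (hq : ∀ a b, q a b = q b a)
    (f : ι → ι → R) :
    ∑ a, ∑ b, q a b * f a b = ∑ a, ∑ b, q a b * f b a := by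
  rw [Finset.sum_comm]
  simp only [hq]

theorem sum_sum_inv_mul_mul [DecidableEq ι] {g ginv : ι → ι → R}
    (hinv : ∀ a b, ∑ c, ginv a c * g c b = if a = b then 1 else 0) (F : ι → R) (β : ι) :
    ∑ a, ∑ b, ginv a b * (g b β * F a) = F β := by
  have hrow : ∀ a, ∑ b, ginv a b * (g b β * F a) = (if a = β then 1 else 0) * F a := by
    intro a
    rw [← hinv a β, Finset.sum_mul]
    simp only [mul_assoc]
  simp [hrow]

theorem sum_sum_sum_sum_comm {M : Type*} [AddCommMonoid M] (f : ι → ι → ι → ι → M) :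
    ∑ a, ∑ b, ∑ c, ∑ d, f a b c d = ∑ c, ∑ d, ∑ a, ∑ b, f a b c d := by
  calc ∑ a, ∑ b, ∑ c, ∑ d, f a b c d
      = ∑ p : ι × ι, ∑ q : ι × ι, f p.1 p.2 q.1 q.2 := by simp only [Fintype.sum_prod_type]
    _ = ∑ q : ι × ι, ∑ p : ι × ι, f p.1 p.2 q.1 q.2 := Finset.sum_comm
    _ = ∑ c, ∑ d, ∑ a, ∑ b, f a b c d := by simp only [Fintype.sum_prod_type]

end ContractionLemmas

/-- `DHessPair`, `DHessSq` and `DHessNormSq` are the Leibniz expansions, as in `DSsc`, of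
`∇_n (H_{αλ} H_{μβ} + H_{αμ} H_{βλ})`, `∇_n (H_a^ρ H_{bρ})` and `∇_n (H_{σρ} H^{σρ})`. -/
def DHessPair {ι : Type*} (H : ι → ι → ℝ) (DH : ι → ι → ι → ℝ) (n α β l μ : ι) : ℝ :=
  DH n α l * H μ β + H α l * DH n μ β + DH n α μ * H β l + H α μ * DH n β l

noncomputable def DHessSq {ι : Type*} [Fintype ι] (ginv H : ι → ι → ℝ) (DH : ι → ι → ι → ℝ)
    (n a b : ι) : ℝ :=
  ∑ ρ, ∑ ρ', ginv ρ ρ' * (DH n a ρ * H b ρ' + H a ρ * DH n b ρ')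

noncomputable def DHessNormSq {ι : Type*} [Fintype ι] (ginv H : ι → ι → ℝ)
    (DH : ι → ι → ι → ℝ) (n : ι) : ℝ :=
  ∑ σ, ∑ ρ, ∑ σ', ∑ ρ', ginv σ σ' * ginv ρ ρ' * (DH n σ ρ * H σ' ρ' + H σ ρ * DH n σ' ρ')

section Superenergy

variable {ι : Type*} [Fintype ι] {g ginv H : ι → ι → ℝ} {DH : ι → ι → ι → ℝ}

theorem DSsc_eq (n α β l μ : ι) :
    DSsc g ginv H DH n α β l μ = DHessPair H DH n α β l μ - g α β * DHessSq ginv H DH n l μ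
      - g l μ * DHessSq ginv H DH n α β + 1 / 2 * g α β * g l μ * DHessNormSq ginv H DH n :=
  rfl

theorem sum_inv_mul_DSsc [DecidableEq ι]
    (hinv : ∀ a b, ∑ c, ginv a c * g c b = if a = b then 1 else 0) (β l μ : ι) :
    ∑ a, ∑ b, ginv a b * DSsc g ginv H DH a b β l μ
      = ∑ a, ∑ b, ginv a b * DHessPair H DH a b β l μ - DHessSq ginv H DH β l μ
        - g l μ * ∑ a, ∑ b, ginv a b * DHessSq ginv H DH a b β
        + 1 / 2 * g l μ * DHessNormSq ginv H DH β := by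
  have hsplit : ∀ a b, ginv a b * DSsc g ginv H DH a b β l μ
      = ginv a b * DHessPair H DH a b β l μ
        + ginv a b * (g b β * (1 / 2 * g l μ * DHessNormSq ginv H DH a - DHessSq ginv H DH a l μ))
        - g l μ * (ginv a b * DHessSq ginv H DH a b β) := by
    intro a b
    rw [DSsc_eq]
    ring
  simp only [hsplit, Finset.sum_add_distrib, Finset.sum_sub_distrib, ← Finset.mul_sum,
    sum_sum_inv_mul_mul hinv]
  ring

theorem sum_inv_mul_DH_mul_eq_zero (hDH1 : ∀ n a b, DH n a b = DH a n b)
    (hDH2 : ∀ n a b, DH n a b = DH n b a)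
    (hwaveD : ∀ n, ∑ ρ, ∑ ρ', ginv ρ ρ' * DH n ρ ρ' = 0) (c : ι) (x : ℝ) :
    ∑ a, ∑ b, ginv a b * (DH a b c * x) = 0 := by
  have hcycle : ∀ a b, DH a b c = DH c a b := fun a b => (hDH2 a b c).trans (hDH1 a c b)
  simp only [← mul_assoc, ← Finset.sum_mul, hcycle, hwaveD, zero_mul]

theorem sum_inv_mul_DHessPair (hginv : ∀ a b, ginv a b = ginv b a) (hH : ∀ a b, H a b = H b a)
    (hDH1 : ∀ n a b, DH n a b = DH a n b) (hDH2 : ∀ n a b, DH n a b = DH n b a)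
    (hwaveD : ∀ n, ∑ ρ, ∑ ρ', ginv ρ ρ' * DH n ρ ρ' = 0) (β l μ : ι) :
    ∑ a, ∑ b, ginv a b * DHessPair H DH a b β l μ = DHessSq ginv H DH β l μ := by
  have hl : ∑ a, ∑ b, ginv a b * (H b l * DH a μ β)
      = ∑ a, ∑ b, ginv a b * (H l a * DH β μ b) := by
    rw [sum_sum_mul_swap_of_symm hginv]
    simp only [hH _ l, hDH1 _ μ β, hDH2 μ, hDH1 μ β]
  have hm : ∑ a, ∑ b, ginv a b * (H b μ * DH a β l)
      = ∑ a, ∑ b, ginv a b * (DH β l a * H μ b) := by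
    simp only [hH _ μ, hDH1 _ β l, hDH2 β _ l, mul_comm (H μ _)]
  simp only [DHessPair, DHessSq, mul_add, Finset.sum_add_distrib,
    sum_inv_mul_DH_mul_eq_zero hDH1 hDH2 hwaveD, hl, hm]
  ring

theorem sum_inv_mul_DHessSq (hginv : ∀ a b, ginv a b = ginv b a)
    (hDH1 : ∀ n a b, DH n a b = DH a n b) (hDH2 : ∀ n a b, DH n a b = DH n b a)
    (hwaveD : ∀ n, ∑ ρ, ∑ ρ', ginv ρ ρ' * DH n ρ ρ' = 0) (β : ι) :
    ∑ a, ∑ b, ginv a b * DHessSq ginv H DH a b β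
      = ∑ σ, ∑ ρ, ∑ σ', ∑ ρ', ginv σ σ' * ginv ρ ρ' * (H σ ρ * DH β σ' ρ') := by
  have hsplit : ∀ a b, ginv a b * DHessSq ginv H DH a b β
      = ∑ ρ, ∑ ρ', ginv a b * (DH a b ρ * (ginv ρ ρ' * H β ρ'))
        + ginv a b * ∑ ρ, ∑ ρ', ginv ρ ρ' * (H b ρ * DH β a ρ') := by
    intro a b
    simp only [DHessSq, Finset.mul_sum, ← Finset.sum_add_distrib, hDH1 a β]
    congr! 2 with ρ _ ρ' _
    ring
  simp only [hsplit, Finset.sum_add_distrib]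
  rw [sum_sum_sum_sum_comm]
  simp only [sum_inv_mul_DH_mul_eq_zero hDH1 hDH2 hwaveD, Finset.sum_const_zero, zero_add]
  rw [sum_sum_mul_swap_of_symm hginv]
  simp only [Finset.mul_sum, mul_assoc]
  exact Finset.sum_congr rfl fun a _ => Finset.sum_comm

theorem DHessNormSq_eq_two_mul (hginv : ∀ a b, ginv a b = ginv b a) (n : ι) :
    DHessNormSq ginv H DH n
      = 2 * ∑ σ, ∑ ρ, ∑ σ', ∑ ρ', ginv σ σ' * ginv ρ ρ' * (H σ ρ * DH n σ' ρ') := by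
  have hswap : ∑ σ, ∑ ρ, ∑ σ', ∑ ρ', ginv σ σ' * ginv ρ ρ' * (DH n σ ρ * H σ' ρ')
      = ∑ σ, ∑ ρ, ∑ σ', ∑ ρ', ginv σ σ' * ginv ρ ρ' * (H σ ρ * DH n σ' ρ') := by
    rw [sum_sum_sum_sum_comm]
    congr! 4 with σ _ ρ _ σ' _ ρ' _
    rw [hginv σ' σ, hginv ρ' ρ]
    ring
  simp only [DHessNormSq, mul_add, Finset.sum_add_distrib, hswap]
  ring

end Superenergy

theorem scalar_superenergy_divergence_free_flat_general {ι : Type*} [Fintype ι] [DecidableEq ι]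
    (g ginv : ι → ι → ℝ) (H : ι → ι → ℝ) (DH : ι → ι → ι → ℝ)
    (hginv : ∀ a b, ginv a b = ginv b a)
    (hinv : ∀ a b, ∑ c, ginv a c * g c b = if a = b then 1 else 0)
    (hH : ∀ a b, H a b = H b a)
    (hDH1 : ∀ n a b, DH n a b = DH a n b)
    (hDH2 : ∀ n a b, DH n a b = DH n b a)
    (hwaveD : ∀ n, ∑ ρ, ∑ ρ', ginv ρ ρ' * DH n ρ ρ' = 0) :
    ∀ β l μ, ∑ α, ∑ α', ginv α α' * DSsc g ginv H DH α α' β l μ = 0 := by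
  intro β l μ
  rw [sum_inv_mul_DSsc hinv, sum_inv_mul_DHessPair hginv hH hDH1 hDH2 hwaveD,
    sum_inv_mul_DHessSq hginv hDH1 hDH2 hwaveD, DHessNormSq_eq_two_mul hginv]
  ring

/-- In flat spacetime (vanishing Riemann tensor, so covariant
derivatives commute and third derivatives of `φ` are totally symmetric), the
superenergy tensor of a solution `φ` of the wave equation `∇_μ∇^μ φ = 0` is
divergence-free: `∇^α S_{αβλμ} = 0`.
Hypotheses: `H` is the (symmetric) Hessian of `φ`; `DH = ∇H` is totally
symmetric (flatness); the wave equation and its derivative hold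
(`g^{ρρ'} H_{ρρ'} = 0`, `g^{ρρ'} DH_{νρρ'} = 0`). -/
theorem scalar_superenergy_divergence_free_flat {ι : Type*} [Fintype ι] [DecidableEq ι]
    (g ginv : ι → ι → ℝ) (H : ι → ι → ℝ) (DH : ι → ι → ι → ℝ)
    (hg : ∀ a b, g a b = g b a) (hginv : ∀ a b, ginv a b = ginv b a)
    (hinv : ∀ a b, ∑ c, ginv a c * g c b = if a = b then 1 else 0)
    (hH : ∀ a b, H a b = H b a)
    (hDH1 : ∀ n a b, DH n a b = DH a n b)
    (hDH2 : ∀ n a b, DH n a b = DH n b a)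
    (hwave : ∑ ρ, ∑ ρ', ginv ρ ρ' * H ρ ρ' = 0)
    (hwaveD : ∀ n, ∑ ρ, ∑ ρ', ginv ρ ρ' * DH n ρ ρ' = 0) :
    ∀ β l μ, ∑ α, ∑ α', ginv α α' * DSsc g ginv H DH α α' β l μ = 0 :=
  scalar_superenergy_divergence_free_flat_general g ginv H DH hginv hinv hH hDH1 hDH2 hwaveD
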